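/- arXiv:1108.2579 — 4 statements merged into one kernel-verified Lean document; each statement's English description precedes it below -/
import Mathlib

section
/- Let m ≥ 2 be an integer and a, b integers with gcd(ab, m) = 1. Then C_m(ab) ≡ C_m(a) + C_m(b) (mod m). -/
/-- The Carmichael function `λ(m)`: the smallest positive integer `n` such that
`a ^ n ≡ 1 (mod m)` for every integer `a` coprime to `m`. -/
noncomputable def carmichael (m : ℕ) : ℕ :=
  sInf {n : ℕ | 0 < n ∧ ∀ a : ℤ, Int.gcd a m = 1 → a ^ n ≡ 1 [ZMOD (m : ℤ)]}

/-- The Carmichael quotient `C_m(a) = (a^{λ(m)} - 1) / m`. -/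
noncomputable def carQuot (m : ℕ) (a : ℤ) : ℤ := (a ^ carmichael m - 1) / m

/-! Since `a ^ λ(m) ≡ 1 (mod m)`, the division defining `C_m(a)` is exact:
`a ^ λ(m) = 1 + m C_m(a)`. Multiplying two such identities gives
`C_m(ab) = C_m(a) + C_m(b) + m C_m(a) C_m(b)`. -/

theorem Int.ModEq.pow_totient {m : ℕ} {a : ℤ} (h : IsCoprime a m) :
    a ^ m.totient ≡ 1 [ZMOD m] := by
  rw [← ZMod.intCast_eq_intCast_iff]
  simpa only [Units.val_pow_eq_pow_val, ZMod.coe_unitOfIsCoprime, Units.val_one, Int.cast_pow,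
    Int.cast_one] using congrArg Units.val (ZMod.pow_totient (ZMod.unitOfIsCoprime a h))

theorem pow_carmichael_modEq_one {m : ℕ} (hm : 0 < m) {a : ℤ} (ha : IsCoprime a m) :
    a ^ carmichael m ≡ 1 [ZMOD m] := by
  have hmem : carmichael m ∈
      {n : ℕ | 0 < n ∧ ∀ a : ℤ, Int.gcd a m = 1 → a ^ n ≡ 1 [ZMOD (m : ℤ)]} :=
    Nat.sInf_mem ⟨m.totient, Nat.totient_pos.mpr hm,
      fun _ hx => Int.ModEq.pow_totient (Int.isCoprime_iff_gcd_eq_one.mpr hx)⟩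
  exact hmem.2 a (Int.isCoprime_iff_gcd_eq_one.mp ha)

theorem pow_carmichael_eq_one_add_mul_carQuot {m : ℕ} (hm : 0 < m) {a : ℤ}
    (ha : IsCoprime a m) : a ^ carmichael m = 1 + m * carQuot m a := by
  rw [carQuot, Int.mul_ediv_cancel' (pow_carmichael_modEq_one hm ha).symm.dvd]
  ring

theorem carQuot_mul {m : ℕ} (hm : 0 < m) {a b : ℤ} (ha : IsCoprime a m) (hb : IsCoprime b m) :
    carQuot m (a * b) = carQuot m a + carQuot m b + m * (carQuot m a * carQuot m b) := by
  have hm0 : (m : ℤ) ≠ 0 := by positivity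
  refine mul_left_cancel₀ hm0 (add_left_cancel (a := 1) ?_)
  rw [← pow_carmichael_eq_one_add_mul_carQuot hm (ha.mul_left hb), mul_pow,
    pow_carmichael_eq_one_add_mul_carQuot hm ha, pow_carmichael_eq_one_add_mul_carQuot hm hb]
  ring

theorem stmt1 (m : ℕ) (hm : 2 ≤ m) (a b : ℤ) (hab : Int.gcd (a * b) m = 1) :
    carQuot m (a * b) ≡ carQuot m a + carQuot m b [ZMOD (m : ℤ)] := by
  have hcop : IsCoprime (a * b) m := Int.isCoprime_iff_gcd_eq_one.mpr hab
  rw [carQuot_mul (by omega) hcop.of_mul_left_left hcop.of_mul_left_right]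
  exact Int.modEq_add_fac_self
end

section
/- Let m ≥ 2 be an integer, a ≥ 1 an integer with gcd(a, m) = 1, and let n = ord_m(a) be the multiplicative order of a modulo m. Then C_m(a) ≡ −λ(m) · (a·n)⁻¹ · Σ_{k=0}^{a−1} Σ_{r=1, r ∈ ⟨a⟩}^{⌊k·m/a⌋} r^{λ(m)−1} (mod m), where the inner sum is over integers r with 1 ≤ r ≤ ⌊k·m/a⌋ whose residue class lies in the subgroup ⟨a⟩ of (ℤ/mℤ)* generated by a, and (a·n)⁻¹ denotes a multiplicative inverse of a·n modulo m. -/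
/-!
Write `a r = m ⌊a r / m⌋ + (a r mod m)`. Multiplication by `a` permutes the set `R ⊂ [1, m)` of
representatives of `⟨a⟩`, so expanding `(a r)^λ` modulo `m²` and summing over `R` gives
`C_m(a) · Σ r^λ ≡ λ a^(λ-1) Σ ⌊a r / m⌋ r^(λ-1) (mod m)`, with `Σ_{r ∈ R} r^λ ≡ |R| = n`.
Exchanging the order of summation turns the double sum into `Σ_{r ∈ R} (a - 1 - ⌊a r / m⌋) r^(λ-1)`,
and `(a - 1) Σ_{r ∈ R} r^(λ-1) ≡ 0` by the same permutation.
-/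

open Finset

section Carmichael

variable {m : ℕ}

private theorem carmichael_mem (hm : 0 < m) :
    0 < carmichael m ∧ ∀ x : ℤ, Int.gcd x m = 1 → x ^ carmichael m ≡ 1 [ZMOD (m : ℤ)] := by
  refine Nat.sInf_mem (s := {n : ℕ | 0 < n ∧ ∀ x : ℤ, Int.gcd x m = 1 → x ^ n ≡ 1 [ZMOD (m : ℤ)]})
    ⟨Nat.totient m, Nat.totient_pos.2 hm, fun x hx => ?_⟩
  have h := congrArg Units.val
    (ZMod.pow_totient (ZMod.unitOfIsCoprime x (Int.isCoprime_iff_gcd_eq_one.2 hx)))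
  push_cast [ZMod.coe_unitOfIsCoprime] at h
  exact (ZMod.intCast_eq_intCast_iff _ _ _).1 (by simpa using h)

theorem carmichael_pos (hm : 0 < m) : 0 < carmichael m :=
  (carmichael_mem hm).1

theorem natCast_pow_carmichael (hm : 0 < m) {r : ℕ} (hr : r.Coprime m) :
    (r : ZMod m) ^ carmichael m = 1 := by
  have h := (ZMod.intCast_eq_intCast_iff _ _ _).2
    ((carmichael_mem hm).2 r (by rwa [Int.gcd_natCast_natCast]))
  simpa using h

theorem natCast_mul_carQuot (hm : 0 < m) {a : ℕ} (ha : a.Coprime m) :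
    (m : ℤ) * carQuot m a = (a : ℤ) ^ carmichael m - 1 := by
  refine Int.mul_ediv_cancel' ((ZMod.intCast_zmod_eq_zero_iff_dvd _ _).1 ?_)
  push_cast
  rw [natCast_pow_carmichael hm ha, sub_self]

end Carmichael

theorem pow_modEq_pow_mod_add (m y L : ℕ) :
    (y : ℤ) ^ L ≡ ((y % m : ℕ) : ℤ) ^ L + m * (L * (y / m : ℕ) * (y : ℤ) ^ (L - 1))
      [ZMOD m ^ 2] := by
  set x : ℤ := ((y % m : ℕ) : ℤ)
  set q : ℤ := ((y / m : ℕ) : ℤ)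
  have hy : (y : ℤ) = x + m * q := by
    simp only [x, q]; exact_mod_cast (Nat.mod_add_div y m).symm
  have hbinom : (y : ℤ) ^ L ≡ x ^ L + m * (L * q * x ^ (L - 1)) [ZMOD m ^ 2] := by
    refine (Int.modEq_iff_dvd.2 ?_).symm
    have h := (pow_dvd_pow_of_dvd (dvd_mul_right (m : ℤ) q) 2).trans
      (sq_dvd_add_pow_sub_sub ((m : ℤ) * q) x L)
    rw [hy, show ∀ t : ℤ, t - (x ^ L + m * (L * q * x ^ (L - 1))) =
      t - x ^ (L - 1) * (m * q) * L - x ^ L from fun t => by ring]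
    exact h
  have hx : x ≡ y [ZMOD m] := by
    simp only [x]; exact_mod_cast Nat.mod_modEq y m
  have hlin := ((hx.pow (L - 1)).mul_left (L * q)).mul_left' (c := (m : ℤ))
  rw [← sq] at hlin
  exact hbinom.trans (Int.ModEq.add_left _ hlin)

section MulMod

variable {m a : ℕ} {R : Finset ℕ}

theorem sum_comp_mul_mod {M : Type*} [AddCommMonoid M] (ha : a.Coprime m)
    (hlt : ∀ r ∈ R, r < m) (hmaps : ∀ r ∈ R, a * r % m ∈ R) (f : ℕ → M) :
    ∑ r ∈ R, f (a * r % m) = ∑ r ∈ R, f r := by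
  have hinj : Set.InjOn (fun r => a * r % m) R := fun r hr s hs h =>
    Nat.ModEq.eq_of_lt_of_lt
      (Nat.ModEq.cancel_left_of_coprime (Nat.coprime_comm.1 ha) h) (hlt r hr) (hlt s hs)
  exact Finset.sum_nbij (fun r => a * r % m) hmaps hinj
    (Finset.surjOn_of_injOn_of_card_le _ hmaps hinj le_rfl) fun _ _ => rfl

theorem mul_sum_pow_modEq_sum_div_mul_pow (hm : m ≠ 0) (ha : a.Coprime m)
    (hlt : ∀ r ∈ R, r < m) (hmaps : ∀ r ∈ R, a * r % m ∈ R) {L : ℕ} {C : ℤ}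
    (hC : (m : ℤ) * C = (a : ℤ) ^ L - 1) :
    C * ∑ r ∈ R, (r : ℤ) ^ L ≡
      L * (a : ℤ) ^ (L - 1) * ∑ r ∈ R, ((a * r / m : ℕ) : ℤ) * (r : ℤ) ^ (L - 1) [ZMOD m] := by
  refine Int.ModEq.mul_left_cancel' (Int.natCast_ne_zero.2 hm) ?_
  have hperm := sum_comp_mul_mod ha hlt hmaps fun r => (r : ℤ) ^ L
  have hterms := Int.ModEq.sum fun r (_ : r ∈ R) => pow_modEq_pow_mod_add m (a * r) L
  rw [← sq]
  calc (m : ℤ) * (C * ∑ r ∈ R, (r : ℤ) ^ L)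
      = ∑ r ∈ R, ((a * r : ℕ) : ℤ) ^ L - ∑ r ∈ R, ((a * r % m : ℕ) : ℤ) ^ L := by
        rw [hperm, ← mul_assoc, hC, sub_mul, one_mul, mul_sum]
        push_cast [mul_pow]; rfl
    _ ≡ ∑ r ∈ R, (m : ℤ) * (L * (a * r / m : ℕ) * ((a * r : ℕ) : ℤ) ^ (L - 1)) [ZMOD m ^ 2] := by
        refine (hterms.sub_right _).trans ?_
        rw [sum_add_distrib, add_sub_cancel_left]
    _ = m * (L * (a : ℤ) ^ (L - 1) * ∑ r ∈ R, ((a * r / m : ℕ) : ℤ) * (r : ℤ) ^ (L - 1)) := by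
        rw [mul_sum, mul_sum]
        refine sum_congr rfl fun r _ => ?_
        push_cast
        ring

end MulMod

open scoped Classical in
noncomputable def powerResidues (m a : ℕ) : Finset ℕ :=
  (Finset.Icc 1 (m - 1)).filter fun r => ∃ j : ℕ, ((r : ℕ) : ZMod m) = ((a : ℕ) : ZMod m) ^ j

section PowerResidues

variable {m a r : ℕ}

theorem mem_powerResidues :
    r ∈ powerResidues m a ↔ (1 ≤ r ∧ r ≤ m - 1) ∧ ∃ j : ℕ, (r : ZMod m) = (a : ZMod m) ^ j := by
  simp only [powerResidues, mem_filter, mem_Icc]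

theorem lt_of_mem_powerResidues (hr : r ∈ powerResidues m a) : r < m := by
  have := (mem_powerResidues.1 hr).1
  omega

theorem coprime_of_mem_powerResidues (ha : a.Coprime m) (hr : r ∈ powerResidues m a) :
    r.Coprime m := by
  obtain ⟨-, j, hj⟩ := mem_powerResidues.1 hr
  rw [← ZMod.isUnit_iff_coprime, hj]
  exact ((ZMod.isUnit_iff_coprime a m).2 ha).pow j

theorem not_dvd_mul_of_mem_powerResidues (ha : a.Coprime m) (hr : r ∈ powerResidues m a) :
    ¬ m ∣ a * r := fun hdvd => by
  have h1 := Nat.Coprime.eq_one_of_dvd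
    (Nat.coprime_comm.1 (Nat.Coprime.mul_left ha (coprime_of_mem_powerResidues ha hr))) hdvd
  have := lt_of_mem_powerResidues hr
  have := (mem_powerResidues.1 hr).1
  omega

theorem mul_mod_mem_powerResidues (ha : a.Coprime m) (hr : r ∈ powerResidues m a) :
    a * r % m ∈ powerResidues m a := by
  have hm := lt_of_mem_powerResidues hr
  have hne : a * r % m ≠ 0 := fun h0 =>
    not_dvd_mul_of_mem_powerResidues ha hr (Nat.dvd_of_mod_eq_zero h0)
  obtain ⟨-, j, hj⟩ := mem_powerResidues.1 hr
  refine mem_powerResidues.2 ⟨⟨by omega, by have := Nat.mod_lt (a * r) (by omega : 0 < m); omega⟩,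
    j + 1, ?_⟩
  rw [ZMod.natCast_mod, Nat.cast_mul, hj, pow_succ', mul_comm]

theorem card_powerResidues (hm : 2 ≤ m) (ha : a.Coprime m) :
    (powerResidues m a).card = orderOf (a : ZMod m) := by
  have : Fact (1 < m) := ⟨hm⟩
  set A : ZMod m := (a : ZMod m)
  have hA : IsUnit A := (ZMod.isUnit_iff_coprime a m).2 ha
  have hinj : Set.InjOn (fun j => (A ^ j).val) (range (orderOf A)) := fun i hi j hj h =>
    pow_injOn_Iio_orderOf (by simpa using hi) (by simpa using hj) (ZMod.val_injective m h)
  suffices powerResidues m a = (range (orderOf A)).image fun j => (A ^ j).val by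
    rw [this, card_image_of_injOn hinj, card_range]
  ext r
  simp only [mem_powerResidues, mem_image, mem_range]
  constructor
  · rintro ⟨hr, j, hj⟩
    refine ⟨j % orderOf A, Nat.mod_lt _ hA.isOfFinOrder.orderOf_pos, ?_⟩
    rw [pow_mod_orderOf, ← hj, ZMod.val_cast_of_lt (by omega)]
  · rintro ⟨j, -, rfl⟩
    have hpos : (A ^ j).val ≠ 0 := (ZMod.val_ne_zero _).2 (hA.pow j).ne_zero
    exact ⟨⟨by omega, by have := ZMod.val_lt (A ^ j); omega⟩, j, ZMod.natCast_zmod_val _⟩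

theorem pow_mul_sum_pow_powerResidues (ha : a.Coprime m) (k : ℕ) :
    (a : ZMod m) ^ k * ∑ r ∈ powerResidues m a, (r : ZMod m) ^ k =
      ∑ r ∈ powerResidues m a, (r : ZMod m) ^ k := by
  have h := sum_comp_mul_mod ha (fun _ => lt_of_mem_powerResidues)
    (fun _ => mul_mod_mem_powerResidues ha) fun r => (r : ZMod m) ^ k
  rw [mul_sum, ← h]
  refine sum_congr rfl fun r _ => ?_
  rw [ZMod.natCast_mod, Nat.cast_mul, mul_pow]

theorem sum_natCast_pow_carmichael_powerResidues (hm : 2 ≤ m) (ha : a.Coprime m) :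
    ∑ r ∈ powerResidues m a, (r : ZMod m) ^ carmichael m = orderOf (a : ZMod m) := by
  rw [sum_congr rfl fun r hr =>
      natCast_pow_carmichael (by omega) (coprime_of_mem_powerResidues ha hr),
    sum_const, card_powerResidues hm ha, nsmul_one]

theorem carQuot_mul_orderOf (hm : 2 ≤ m) (ha : a.Coprime m) :
    (carQuot m a : ZMod m) * orderOf (a : ZMod m) =
      carmichael m * (a : ZMod m) ^ (carmichael m - 1) *
        ∑ r ∈ powerResidues m a, ((a * r / m : ℕ) : ZMod m) * (r : ZMod m) ^ (carmichael m - 1) := by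
  have h := (ZMod.intCast_eq_intCast_iff _ _ _).2 <|
    mul_sum_pow_modEq_sum_div_mul_pow (by omega) ha (fun _ => lt_of_mem_powerResidues)
      (fun _ => mul_mod_mem_powerResidues ha) (natCast_mul_carQuot (by omega) ha)
  simp only [Int.cast_mul, Int.cast_sum, Int.cast_pow, Int.cast_natCast] at h
  rwa [sum_natCast_pow_carmichael_powerResidues hm ha] at h

end PowerResidues

theorem card_filter_range_le_mul_div {m a r : ℕ} (hm : 0 < m) (ha : 0 < a) (hr : ¬ m ∣ a * r) :
    ((range a).filter fun k => r ≤ k * m / a).card = a - a * r / m - 1 := by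
  rw [← Nat.card_Ioo]
  congr 1
  ext k
  simp only [mem_filter, mem_range, mem_Ioo, Nat.le_div_iff_mul_le ha, Nat.div_lt_iff_lt_mul hm]
  have hne : a * r ≠ k * m := fun h => hr ⟨k, by rw [h, mul_comm]⟩
  rw [mul_comm r a]
  omega

theorem sum_range_sum_filter_Icc_div {M : Type*} [Ring M] {m a : ℕ} (P : ℕ → Prop)
    [DecidablePred P] (hm : 0 < m) (ha : 0 < a)
    (hP : ∀ r ∈ (Icc 1 (m - 1)).filter P, ¬ m ∣ a * r) (f : ℕ → M) :
    ∑ k ∈ range a, ∑ r ∈ (Icc 1 (k * m / a)).filter P, f r =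
      ∑ r ∈ (Icc 1 (m - 1)).filter P, ((a : M) - (a * r / m : ℕ) - 1) * f r := by
  have hdiv_lt : ∀ {k}, k < a → k * m / a < m := fun hk =>
    Nat.div_lt_of_lt_mul (Nat.mul_lt_mul_of_pos_right hk hm)
  rw [sum_comm' (s' := fun r => (range a).filter fun k => r ≤ k * m / a)
    (t' := (Icc 1 (m - 1)).filter P)]
  · refine sum_congr rfl fun r hr => ?_
    have hq : a * r / m < a := by
      have := (mem_Icc.1 (mem_filter.1 hr).1).2
      exact Nat.div_lt_of_lt_mul
        (by rw [mul_comm m]; exact Nat.mul_lt_mul_of_pos_left (by omega) ha)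
    rw [sum_const, card_filter_range_le_mul_div hm ha (hP r hr), nsmul_eq_mul, Nat.sub_sub,
      Nat.cast_sub (by omega)]
    push_cast
    rw [sub_sub]
  · intro k r
    simp only [mem_range, mem_filter, mem_Icc]
    constructor
    · rintro ⟨hk, ⟨h1, h2⟩, hPr⟩
      exact ⟨⟨hk, h2⟩, ⟨h1, by have := hdiv_lt hk; omega⟩, hPr⟩
    · rintro ⟨⟨hk, h2⟩, ⟨h1, -⟩, hPr⟩
      exact ⟨hk, ⟨h1, h2⟩, hPr⟩

open scoped Classical in
theorem stmt9 (m : ℕ) (hm : 2 ≤ m) (a : ℕ) (ha1 : 1 ≤ a) (ha : Nat.gcd a m = 1)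
    (n : ℕ) (hn : n = orderOf ((a : ZMod m)))
    (b : ℤ) (hb : ((a * n : ℕ) : ℤ) * b ≡ 1 [ZMOD (m : ℤ)]) :
    carQuot m a ≡
      -(carmichael m : ℤ) * b *
        ∑ k ∈ Finset.range a,
          ∑ r ∈ (Finset.Icc 1 (k * m / a)).filter
              (fun r => ∃ j : ℕ, ((r : ℕ) : ZMod m) = ((a : ℕ) : ZMod m) ^ j),
            (r : ℤ) ^ (carmichael m - 1) [ZMOD (m : ℤ)] := by
  have hm0 : 0 < m := by omega
  set L := carmichael m
  set A : ZMod m := (a : ZMod m)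
  set T := ∑ r ∈ powerResidues m a, (r : ZMod m) ^ (L - 1)
  set Q := ∑ r ∈ powerResidues m a, ((a * r / m : ℕ) : ZMod m) * (r : ZMod m) ^ (L - 1)
  have hAL : A * A ^ (L - 1) = 1 := by
    rw [← pow_succ', Nat.sub_add_cancel (carmichael_pos hm0), natCast_pow_carmichael hm0 ha]
  have hkey : (carQuot m a : ZMod m) * n = L * A ^ (L - 1) * Q := by
    rw [hn]; exact carQuot_mul_orderOf hm ha
  have hT : (A - 1) * T = 0 := by
    linear_combination (-A) * pow_mul_sum_pow_powerResidues ha (L - 1) + T * hAL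
  have hb' : A * n * (b : ZMod m) = 1 := by
    simpa using (ZMod.intCast_eq_intCast_iff _ _ _).2 hb
  have hsplit : ∑ r ∈ powerResidues m a, (A - (a * r / m : ℕ) - 1) * (r : ZMod m) ^ (L - 1) =
      (A - 1) * T - Q := by
    rw [mul_sum, ← sum_sub_distrib]
    exact sum_congr rfl fun r _ => by ring
  rw [← ZMod.intCast_eq_intCast_iff]
  push_cast
  rw [sum_range_sum_filter_Icc_div _ hm0 ha1 fun r hr => not_dvd_mul_of_mem_powerResidues ha hr]
  rw [powerResidues] at hsplit
  rw [hsplit]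
  linear_combination (-(carQuot m a : ZMod m)) * hb' + A * b * hkey + L * b * Q * hAL + L * b * hT
end

section
/- Let m ≥ 2 be an integer, a ≥ 1 an integer with gcd(a, m) = 1, and let n = ord_m(a) be the multiplicative order of a modulo m. For 0 ≤ k ≤ a−1 put s(k, a) = Σ r^{λ(m)−1}, the sum over integers r with k·m/a < r < (k+1)·m/a whose residue class lies in the subgroup ⟨a⟩ of (ℤ/mℤ)* generated by a. Then C_m(a) ≡ λ(m) · (a·n)⁻¹ · Σ_{k=0}^{a−1} k·s(k, a) (mod m), where (a·n)⁻¹ denotes a multiplicative inverse of a·n modulo m. -/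
open Finset

theorem Int.pow_totient_modEq_one {c : ℤ} {m : ℕ} (hc : Int.gcd c m = 1) :
    c ^ Nat.totient m ≡ 1 [ZMOD m] := by
  rw [← ZMod.intCast_eq_intCast_iff]
  have := congrArg Units.val
    (ZMod.pow_totient (ZMod.unitOfIsCoprime c (Int.isCoprime_iff_gcd_eq_one.mpr hc)))
  push_cast at this ⊢
  exact this

theorem carmichael_spec {m : ℕ} (hm : 0 < m) :
    0 < carmichael m ∧ ∀ c : ℤ, Int.gcd c m = 1 → c ^ carmichael m ≡ 1 [ZMOD m] :=
  Nat.sInf_mem (s := {n | 0 < n ∧ ∀ c : ℤ, Int.gcd c m = 1 → c ^ n ≡ 1 [ZMOD m]})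
    ⟨_, Nat.totient_pos.mpr hm, fun _ => Int.pow_totient_modEq_one⟩

theorem Int.pow_modEq_emod_pow_add_sq (N m : ℤ) (L : ℕ) :
    N ^ L ≡ (N % m) ^ L + L * m * (N / m) * N ^ (L - 1) [ZMOD m ^ 2] := by
  set x := N % m
  set q := N / m
  have hbinom : (m * q) ^ 2 ∣ N ^ L - x ^ (L - 1) * (m * q) * L - x ^ L := by
    simpa only [x, q, Int.emod_add_mul_ediv] using sq_dvd_add_pow_sub_sub (m * q) x L
  have hlin : m ∣ x ^ (L - 1) - N ^ (L - 1) := ((Int.mod_modEq N m).pow (L - 1)).symm.dvd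
  rw [Int.modEq_iff_dvd]
  have hsplit : x ^ L + L * m * q * N ^ (L - 1) - N ^ L
      = -(N ^ L - x ^ (L - 1) * (m * q) * L - x ^ L)
        - m * (q * L * (x ^ (L - 1) - N ^ (L - 1))) := by
    ring
  rw [hsplit]
  refine dvd_sub (dvd_neg.mpr ((Dvd.intro _ (mul_pow m q 2).symm).trans hbinom)) ?_
  rw [sq]
  exact mul_dvd_mul_left m (hlin.mul_left _)

theorem Nat.div_eq_iff_of_not_dvd {N m k : ℕ} (hm : 0 < m) (hN : ¬ m ∣ N) :
    N / m = k ↔ k * m < N ∧ N < (k + 1) * m := by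
  have hne : N ≠ k * m := fun h => hN ⟨k, by rw [h, mul_comm]⟩
  rw [Nat.div_eq_iff hm, add_one_mul]
  omega

open scoped Classical in
noncomputable def powersResidues (m a : ℕ) : Finset ℕ :=
  (range m).filter fun r => ∃ j : ℕ, (r : ZMod m) = (a : ZMod m) ^ j

section powersResidues

variable {m a r : ℕ}

theorem mem_powersResidues :
    r ∈ powersResidues m a ↔ r < m ∧ ∃ j : ℕ, (r : ZMod m) = (a : ZMod m) ^ j := by
  simp [powersResidues]

theorem coprime_of_mem_powersResidues (ha : a.Coprime m) (hr : r ∈ powersResidues m a) :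
    r.Coprime m := by
  obtain ⟨-, j, hj⟩ := mem_powersResidues.mp hr
  rw [← ZMod.isUnit_iff_coprime, hj]
  exact ((ZMod.isUnit_iff_coprime a m).mpr ha).pow j

theorem div_eq_iff_of_mem_powersResidues (hm : 1 < m) (ha : a.Coprime m)
    (hr : r ∈ powersResidues m a) {k : ℕ} : r * a / m = k ↔ k * m < r * a ∧ r * a < (k + 1) * m :=
  Nat.div_eq_iff_of_not_dvd (by omega) fun hdvd =>
    hm.ne' (((coprime_of_mem_powersResidues ha hr).mul_left ha).symm.eq_one_of_dvd hdvd)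

theorem mul_mod_mem_powersResidues (hm : 0 < m) (hr : r ∈ powersResidues m a) :
    r * a % m ∈ powersResidues m a := by
  obtain ⟨-, j, hj⟩ := mem_powersResidues.mp hr
  refine mem_powersResidues.mpr ⟨Nat.mod_lt _ hm, j + 1, ?_⟩
  rw [ZMod.natCast_mod, Nat.cast_mul, hj, pow_succ]

theorem pow_modEq_one_of_mem_powersResidues {L : ℕ} (haL : (a : ℤ) ^ L ≡ 1 [ZMOD m])
    (hr : r ∈ powersResidues m a) : (r : ℤ) ^ L ≡ 1 [ZMOD m] := by
  obtain ⟨-, j, hj⟩ := mem_powersResidues.mp hr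
  rw [← ZMod.intCast_eq_intCast_iff] at haL ⊢
  push_cast at haL ⊢
  rw [hj, ← pow_mul, mul_comm, pow_mul, haL, one_pow]

theorem injOn_natCast_powersResidues :
    Set.InjOn (Nat.cast : ℕ → ZMod m) (powersResidues m a) := by
  intro x hx y hy hxy
  rwa [ZMod.natCast_eq_natCast_iff', Nat.mod_eq_of_lt (mem_powersResidues.mp hx).1,
    Nat.mod_eq_of_lt (mem_powersResidues.mp hy).1] at hxy

theorem injOn_mul_mod_powersResidues (ha : a.Coprime m) :
    Set.InjOn (fun r => r * a % m) (powersResidues m a) := by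
  intro x hx y hy hxy
  refine injOn_natCast_powersResidues hx hy ?_
  have hxy' : (x : ZMod m) * a = y * a := by
    simpa only [ZMod.natCast_mod, Nat.cast_mul] using congrArg (Nat.cast : ℕ → ZMod m) hxy
  exact ((ZMod.isUnit_iff_coprime a m).mpr ha).mul_right_cancel hxy'

theorem sum_powersResidues_comp_mul_mod {M : Type*} [AddCommMonoid M] (hm : 0 < m)
    (ha : a.Coprime m) (f : ℕ → M) :
    ∑ r ∈ powersResidues m a, f (r * a % m) = ∑ r ∈ powersResidues m a, f r := by
  have hmaps : Set.MapsTo (fun r => r * a % m) (powersResidues m a) (powersResidues m a) :=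
    fun _ hr => mul_mod_mem_powersResidues hm hr
  have hbij := ((powersResidues m a).finite_toSet.injOn_iff_bijOn_of_mapsTo hmaps).mp
    (injOn_mul_mod_powersResidues ha)
  exact sum_nbij _ hmaps hbij.injOn hbij.surjOn fun _ _ => rfl

theorem card_powersResidues (hm : 0 < m) (ha : a.Coprime m) :
    #(powersResidues m a) = orderOf (a : ZMod m) := by
  have : NeZero m := ⟨hm.ne'⟩
  have hfin : IsOfFinOrder (a : ZMod m) := ((ZMod.isUnit_iff_coprime a m).mpr ha).isOfFinOrder
  rw [← Nat.card_fin (orderOf _), Nat.card_congr (finEquivPowers hfin), ← SetLike.coe_sort_coe,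
    Nat.card_coe_set_eq, ← Set.ncard_coe_finset,
    ← injOn_natCast_powersResidues.ncard_image]
  congr 1
  ext x
  simp only [Set.mem_image, mem_powersResidues, SetLike.mem_coe,
    Submonoid.mem_powers_iff]
  constructor
  · rintro ⟨r, ⟨-, j, hj⟩, rfl⟩
    exact ⟨j, hj.symm⟩
  · rintro ⟨j, rfl⟩
    exact ⟨(a ^ j : ZMod m).val, ⟨ZMod.val_lt _, j, ZMod.natCast_zmod_val _⟩,
      ZMod.natCast_zmod_val _⟩

end powersResidues

section Lerch

variable {m a L : ℕ}

theorem sum_range_mul_sum_filter_div_eq (hm : 0 < m) (ha : 0 < a) {S : Finset ℕ}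
    (hS : ∀ r ∈ S, r < m) (f : ℕ → ℤ) :
    ∑ k ∈ range a, (k : ℤ) * ∑ r ∈ S with r * a / m = k, f r
      = ∑ r ∈ S, ((r * a / m : ℕ) : ℤ) * f r := by
  have hmaps : ∀ r ∈ S, r * a / m ∈ range a := fun r hr => by
    rw [mem_range, Nat.div_lt_iff_lt_mul hm, mul_comm a m]
    exact Nat.mul_lt_mul_of_pos_right (hS r hr) ha
  rw [← sum_fiberwise_of_maps_to hmaps]
  refine sum_congr rfl fun k _ => ?_
  rw [mul_sum]
  exact sum_congr rfl fun r hr => by rw [(mem_filter.mp hr).2]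

theorem quotient_mul_sum_pow_modEq (hm : 0 < m) (ha : a.Coprime m)
    (haL : (a : ℤ) ^ L ≡ 1 [ZMOD m]) :
    ((a : ℤ) ^ L - 1) / m * ∑ r ∈ powersResidues m a, (r : ℤ) ^ L ≡
      L * (a : ℤ) ^ (L - 1) * ∑ r ∈ powersResidues m a, ((r * a / m : ℕ) : ℤ) * (r : ℤ) ^ (L - 1)
      [ZMOD m] := by
  set C := ((a : ℤ) ^ L - 1) / m
  have hC : (a : ℤ) ^ L = m * C + 1 := by
    have := Int.mul_ediv_cancel' haL.symm.dvd
    linarith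
  have hsum := Int.ModEq.sum (s := powersResidues m a) fun r _ =>
    Int.pow_modEq_emod_pow_add_sq ((r : ℤ) * a) m L
  have hlhs : ∑ r ∈ powersResidues m a, ((r : ℤ) * a) ^ L
      = m * (C * ∑ r ∈ powersResidues m a, (r : ℤ) ^ L)
        + ∑ r ∈ powersResidues m a, (r : ℤ) ^ L := by
    simp_rw [mul_pow]
    rw [← sum_mul, hC]
    ring
  have hmod : ∑ r ∈ powersResidues m a, ((r : ℤ) * a % m) ^ L
      = ∑ r ∈ powersResidues m a, (r : ℤ) ^ L := by
    exact_mod_cast sum_powersResidues_comp_mul_mod hm ha fun r => (r : ℤ) ^ L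
  have hdiv : ∑ r ∈ powersResidues m a, L * (m : ℤ) * ((r : ℤ) * a / m) * ((r : ℤ) * a) ^ (L - 1)
      = m * (L * (a : ℤ) ^ (L - 1) *
        ∑ r ∈ powersResidues m a, ((r * a / m : ℕ) : ℤ) * (r : ℤ) ^ (L - 1)) := by
    rw [mul_sum, mul_sum]
    refine sum_congr rfl fun r _ => ?_
    push_cast
    ring
  rw [sum_add_distrib, hlhs, hmod, hdiv, add_comm (∑ r ∈ powersResidues m a, (r : ℤ) ^ L)] at hsum
  exact Int.ModEq.mul_left_cancel' (Int.natCast_ne_zero.mpr hm.ne')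
    (sq (m : ℤ) ▸ hsum.add_right_cancel' _)

open scoped Classical in
theorem filter_range_eq_filter_powersResidues_div (hm : 1 < m) (ha : a.Coprime m) (k : ℕ) :
    (range m).filter (fun r => k * m < r * a ∧ r * a < (k + 1) * m ∧
      ∃ j : ℕ, ((r : ℕ) : ZMod m) = ((a : ℕ) : ZMod m) ^ j)
      = (powersResidues m a).filter (fun r => r * a / m = k) := by
  ext r
  rw [mem_filter, mem_filter, mem_range]
  constructor
  · rintro ⟨hrm, hlt, hgt, hpow⟩
    have hr := mem_powersResidues.mpr ⟨hrm, hpow⟩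
    exact ⟨hr, (div_eq_iff_of_mem_powersResidues hm ha hr).mpr ⟨hlt, hgt⟩⟩
  · rintro ⟨hr, hk⟩
    obtain ⟨hrm, hpow⟩ := mem_powersResidues.mp hr
    obtain ⟨hlt, hgt⟩ := (div_eq_iff_of_mem_powersResidues hm ha hr).mp hk
    exact ⟨hrm, hlt, hgt, hpow⟩

open scoped Classical in
theorem lerch_formula (hm : 1 < m) (ha1 : 1 ≤ a) (ha : a.Coprime m) (hL : 0 < L)
    (haL : (a : ℤ) ^ L ≡ 1 [ZMOD m]) :
    ((a : ℤ) ^ L - 1) / m * ((a * orderOf (a : ZMod m) : ℕ) : ℤ) ≡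
      L * ∑ k ∈ range a, (k : ℤ) *
        ∑ r ∈ (range m).filter (fun r => k * m < r * a ∧ r * a < (k + 1) * m ∧
            ∃ j : ℕ, ((r : ℕ) : ZMod m) = ((a : ℕ) : ZMod m) ^ j),
          (r : ℤ) ^ (L - 1) [ZMOD m] := by
  have hcard : ∑ r ∈ powersResidues m a, (r : ℤ) ^ L ≡ orderOf (a : ZMod m) [ZMOD m] := by
    rw [← card_powersResidues (by omega) ha]
    simpa using Int.ModEq.sum fun r hr => pow_modEq_one_of_mem_powersResidues haL hr
  have hpow : (a : ℤ) ^ (L - 1) * a = (a : ℤ) ^ L := by rw [← pow_succ, Nat.sub_add_cancel hL]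
  rw [sum_congr rfl fun k _ => by rw [filter_range_eq_filter_powersResidues_div hm ha k],
    sum_range_mul_sum_filter_div_eq (by omega) ha1 fun r hr => (mem_powersResidues.mp hr).1]
  set D := ∑ r ∈ powersResidues m a, ((r * a / m : ℕ) : ℤ) * (r : ℤ) ^ (L - 1)
  calc ((a : ℤ) ^ L - 1) / m * ((a * orderOf (a : ZMod m) : ℕ) : ℤ)
      = ((a : ℤ) ^ L - 1) / m * orderOf (a : ZMod m) * a := by push_cast; ring
    _ ≡ ((a : ℤ) ^ L - 1) / m * (∑ r ∈ powersResidues m a, (r : ℤ) ^ L) * a [ZMOD m] :=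
        (hcard.symm.mul_left _).mul_right _
    _ ≡ L * (a : ℤ) ^ (L - 1) * D * a [ZMOD m] :=
        (quotient_mul_sum_pow_modEq (by omega) ha haL).mul_right _
    _ = L * D * (a : ℤ) ^ L := by rw [← hpow]; ring
    _ ≡ L * D * 1 [ZMOD m] := haL.mul_left _
    _ = L * D := mul_one _

end Lerch

open scoped Classical in
/-- Lerch's formula: with `n = ord_m a` and
`s(k,a) = Σ_{km/a < r < (k+1)m/a, r ∈ ⟨a⟩} r^{λ(m)-1}`
(the condition `km/a < r < (k+1)m/a` on the integer `r` being expressed as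
`km < ra` and `ra < (k+1)m`), one has
`C_m(a) ≡ λ(m)·(an)⁻¹·Σ_{k=0}^{a-1} k·s(k,a) (mod m)`. -/
theorem stmt10 (m : ℕ) (hm : 2 ≤ m) (a : ℕ) (ha1 : 1 ≤ a) (ha : Nat.gcd a m = 1)
    (n : ℕ) (hn : n = orderOf ((a : ZMod m)))
    (b : ℤ) (hb : ((a * n : ℕ) : ℤ) * b ≡ 1 [ZMOD (m : ℤ)]) :
    carQuot m a ≡
      (carmichael m : ℤ) * b *
        ∑ k ∈ Finset.range a, (k : ℤ) *
          ∑ r ∈ (Finset.range m).filter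
              (fun r => k * m < r * a ∧ r * a < (k + 1) * m ∧
                ∃ j : ℕ, ((r : ℕ) : ZMod m) = ((a : ℕ) : ZMod m) ^ j),
            (r : ℤ) ^ (carmichael m - 1) [ZMOD (m : ℤ)] := by
  have hm0 : 0 < m := by omega
  obtain ⟨hL, hpow⟩ := carmichael_spec hm0
  have haL := hpow a (by rwa [Int.gcd_natCast_natCast])
  subst hn
  calc carQuot m a
      ≡ carQuot m a * (((a * orderOf (a : ZMod m) : ℕ) : ℤ) * b) [ZMOD m] := by
        simpa using (hb.mul_left (carQuot m a)).symm
    _ = carQuot m a * ((a * orderOf (a : ZMod m) : ℕ) : ℤ) * b := by ring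
    _ ≡ _ * b [ZMOD m] := (lerch_formula hm ha1 ha hL haL).mul_right b
    _ = _ := by ring
end

section
/- Let p be an odd prime and a an integer with gcd(a, p) = 1. For any integers i, j with 1 ≤ i ≤ j, one has C_{p^j}(a) ≡ C_{p^i}(a) (mod p^i). Moreover, for integers i, j with 3 ≤ i ≤ j and any odd integer a, one has C_{2^j}(a) ≡ C_{2^i}(a) (mod 2^{i−1}). -/
theorem pow_modEq_one_iff_forall_units_pow_eq_one (m n : ℕ) :
    (∀ a : ℤ, Int.gcd a m = 1 → a ^ n ≡ 1 [ZMOD (m : ℤ)]) ↔ ∀ u : (ZMod m)ˣ, u ^ n = 1 := by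
  have hunit (a : ℤ) : Int.gcd a m = 1 ↔ IsUnit (a : ZMod m) := by
    rw [ZMod.coe_int_isUnit_iff_isCoprime, isCoprime_comm, Int.isCoprime_iff_gcd_eq_one]
  have hpow (a : ℤ) : a ^ n ≡ 1 [ZMOD (m : ℤ)] ↔ (a : ZMod m) ^ n = 1 := by
    rw [← ZMod.intCast_eq_intCast_iff, Int.cast_pow, Int.cast_one]
  simp only [hunit, hpow, ← ZMod.intCast_surjective.forall (p := fun x => IsUnit x → x ^ n = 1)]
  exact ⟨fun h u => Units.ext (h u u.isUnit), fun h x ⟨u, hu⟩ => hu ▸ congrArg Units.val (h u)⟩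

theorem carmichael_eq_exponent (m : ℕ) : carmichael m = Monoid.exponent (ZMod m)ˣ := by
  have hleast : IsLeast {n : ℕ | 0 < n ∧ Monoid.exponent (ZMod m)ˣ ∣ n}
      (Monoid.exponent (ZMod m)ˣ) :=
    ⟨⟨Monoid.ExponentExists.of_finite.exponent_pos, dvd_rfl⟩,
      fun _ ⟨hn, hdvd⟩ => Nat.le_of_dvd hn hdvd⟩
  simp only [carmichael, pow_modEq_one_iff_forall_units_pow_eq_one,
    ← Monoid.exponent_dvd_iff_forall_pow_eq_one]
  exact hleast.csInf_eq

theorem carmichael_eq_arithmeticFunction_carmichael {m : ℕ} (hm : m ≠ 0) :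
    carmichael m = ArithmeticFunction.carmichael m := by
  rw [carmichael_eq_exponent, ArithmeticFunction.carmichael_eq_exponent hm]

theorem mul_carQuot {m : ℕ} {a : ℤ} (ha : IsCoprime a m) :
    m * carQuot m a = a ^ carmichael m - 1 := by
  have hmod : a ^ carmichael m ≡ 1 [ZMOD (m : ℤ)] := by
    rw [carmichael_eq_exponent]
    exact (pow_modEq_one_iff_forall_units_pow_eq_one m _).mpr Monoid.pow_exponent_eq_one a
      (Int.isCoprime_iff_gcd_eq_one.mp ha)
  exact Int.mul_ediv_cancel' (Int.ModEq.dvd hmod.symm)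

theorem carQuot_mul_modEq {q m : ℕ} {a d : ℤ} (hqm : q * m ≠ 0) (ha : IsCoprime a (q * m : ℕ))
    (hcarm : carmichael (q * m) = q * carmichael m)
    (hd : d * (q * m) ∣ (1 + m * carQuot m a) ^ q - 1 - q * (m * carQuot m a)) :
    carQuot (q * m) a ≡ carQuot m a [ZMOD d] := by
  set C := carQuot m a
  have hm : m * C = a ^ carmichael m - 1 :=
    mul_carQuot (by push_cast at ha; exact ha.of_mul_right_right)
  have hqm' : (q * m : ℕ) * carQuot (q * m) a = a ^ carmichael (q * m) - 1 := mul_carQuot ha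
  have hpow : a ^ carmichael (q * m) = (1 + m * C) ^ q := by rw [hcarm, pow_mul', hm]; ring
  have hdiff : (1 + m * C) ^ q - 1 - q * (m * C) = (carQuot (q * m) a - C) * (q * m) := by
    push_cast at hqm'
    linear_combination -hqm' - hpow
  rw [hdiff, mul_dvd_mul_iff_right (by exact_mod_cast hqm)] at hd
  exact (Int.modEq_iff_dvd.mpr hd).symm

theorem mul_sq_dvd_one_add_pow_sub_sub {R : Type*} [CommRing R] {p : ℕ} (hp : p.Prime)
    (hp2 : p ≠ 2) {y : R} (hy : (p : R) ∣ y) : (p : R) * y ^ 2 ∣ (1 + y) ^ p - 1 - p * y := by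
  obtain ⟨n, rfl⟩ : ∃ n, p = n + 3 := ⟨p - 3, by have := hp.two_le; omega⟩
  rw [add_comm (1 : R) y, add_pow, Finset.sum_range_succ', Finset.sum_range_succ',
    Finset.sum_range_succ]
  simp only [zero_add, one_pow, mul_one, pow_zero, pow_one, Nat.choose_zero_right,
    Nat.choose_one_right, Nat.choose_self, Nat.cast_one, add_sub_cancel_right]
  rw [mul_comm y, add_sub_cancel_right]
  refine dvd_add (Finset.dvd_sum fun k hk => ?_) ?_
  · obtain ⟨c, hc⟩ := hp.dvd_choose_self (by omega) (by simp at hk; omega : k + 1 + 1 < n + 3)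
    rw [hc]
    exact ⟨y ^ k * c, by push_cast; ring⟩
  · obtain ⟨z, rfl⟩ := hy
    exact ⟨z * (↑(n + 3) * z) ^ n, by ring⟩

theorem carQuot_prime_pow_succ_modEq {p : ℕ} (hp : p.Prime) (hp2 : p ≠ 2) {a : ℤ}
    (ha : IsCoprime a p) {j : ℕ} (hj : 1 ≤ j) :
    carQuot (p ^ (j + 1)) a ≡ carQuot (p ^ j) a [ZMOD (p : ℤ) ^ j] := by
  have hcarm : carmichael (p * p ^ j) = p * carmichael (p ^ j) := by
    rw [← pow_succ', carmichael_eq_arithmeticFunction_carmichael (pow_ne_zero _ hp.ne_zero),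
      carmichael_eq_arithmeticFunction_carmichael (pow_ne_zero _ hp.ne_zero),
      ArithmeticFunction.carmichael_pow_of_prime_ne_two _ hp hp2,
      ArithmeticFunction.carmichael_pow_of_prime_ne_two _ hp hp2, pow_succ',
      Nat.totient_mul_of_prime_of_dvd hp (dvd_pow_self p (by omega))]
  rw [pow_succ']
  refine carQuot_mul_modEq (mul_ne_zero hp.ne_zero (pow_ne_zero _ hp.ne_zero))
    (by push_cast; exact ha.mul_right ha.pow_right) hcarm ?_
  push_cast
  exact dvd_trans ⟨carQuot (p ^ j) a ^ 2, by ring⟩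
    (mul_sq_dvd_one_add_pow_sub_sub hp hp2 (Dvd.dvd.mul_right (dvd_pow_self _ (by omega)) _))

theorem carQuot_two_pow_succ_modEq {a : ℤ} (ha : Odd a) {j : ℕ} (hj : 3 ≤ j) :
    carQuot (2 ^ (j + 1)) a ≡ carQuot (2 ^ j) a [ZMOD 2 ^ (j - 1)] := by
  have hcarm : carmichael (2 * 2 ^ j) = 2 * carmichael (2 ^ j) := by
    rw [carmichael_eq_arithmeticFunction_carmichael (by positivity),
      carmichael_eq_arithmeticFunction_carmichael (by positivity), ← pow_succ',
      ArithmeticFunction.carmichael_two_pow_of_ne_two (by omega),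
      ArithmeticFunction.carmichael_two_pow_of_ne_two (by omega), ← pow_succ']
    congr 1
    omega
  have ha' : IsCoprime a 2 := Int.isCoprime_two_right.mpr ha
  rw [pow_succ']
  refine carQuot_mul_modEq (by positivity)
    (by push_cast; exact ha'.mul_right ha'.pow_right) hcarm ?_
  push_cast
  have h2j : (2 : ℤ) ^ j = 2 * 2 ^ (j - 1) := by rw [← pow_succ']; congr 1; omega
  exact ⟨carQuot (2 ^ j) a ^ 2, by rw [h2j]; ring⟩

theorem Int.ModEq.of_forall_succ_modEq_pow {f : ℕ → ℤ} {b : ℤ} {e : ℕ → ℕ} (he : Monotone e)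
    {i j : ℕ} (hf : ∀ n ≥ i, f (n + 1) ≡ f n [ZMOD b ^ e n]) (hij : i ≤ j) :
    f j ≡ f i [ZMOD b ^ e i] := by
  induction j, hij using Nat.le_induction with
  | base => rfl
  | succ n hin ih => exact ((hf n hin).of_dvd (pow_dvd_pow b (he hin))).trans ih

theorem stmt13 :
    (∀ p : ℕ, p.Prime → p ≠ 2 → ∀ a : ℤ, Int.gcd a p = 1 →
      ∀ i j : ℕ, 1 ≤ i → i ≤ j →
        carQuot (p ^ j) a ≡ carQuot (p ^ i) a [ZMOD ((p : ℤ) ^ i)]) ∧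
    (∀ a : ℤ, Odd a → ∀ i j : ℕ, 3 ≤ i → i ≤ j →
      carQuot (2 ^ j) a ≡ carQuot (2 ^ i) a [ZMOD ((2 : ℤ) ^ (i - 1))]) := by
  refine ⟨fun p hp hp2 a ha i j hi hij => ?_, fun a ha i j hi hij => ?_⟩
  · have ha' : IsCoprime a p := Int.isCoprime_iff_gcd_eq_one.mpr ha
    exact Int.ModEq.of_forall_succ_modEq_pow (f := fun n => carQuot (p ^ n) a) monotone_id
      (fun n hn => carQuot_prime_pow_succ_modEq hp hp2 ha' (hi.trans hn)) hij
  · exact Int.ModEq.of_forall_succ_modEq_pow (f := fun n => carQuot (2 ^ n) a)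
      (e := (· - 1)) (fun _ _ h => Nat.sub_le_sub_right h 1)
      (fun n hn => carQuot_two_pow_succ_modEq ha (hi.trans hn)) hij
end
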